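/- arXiv:2507.15870 — 6 statements merged into one kernel-verified Lean document; each statement's English description precedes it below -/
import Mathlib

section
/- Let w, v ∈ ℝ² with |w| denoting the second coordinate (height). Suppose w' = w + 2v where v = (p,q) ∈ ℤ² primitive with β|w| ≤ q ≤ 2β|w| and 1/β < |w × v| < 1/α, for parameters 1 < α and α < β. Then |(w'₁/w'₂) − p/q| < |w × v|/(2q²) < 1/(2q²), hence p/q is a convergent of the continued fraction expansion of w'₁/w'₂. -/
/-- If `w' = w + 2v` with `v = (p,q)` primitive, `β|w| ≤ q ≤ 2β|w|` and
`1/β < |w × v| < 1/α` for `1 < α < β`, then `p/q` is within `|w×v|/(2q²) < 1/(2q²)` of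
the inverse slope of `w'`, hence a continued fraction convergent of it. -/
theorem child_slit_convergent
    (w : ℝ × ℝ) (hw : 0 < w.2) (hirr : Irrational (w.1 / w.2))
    (p : ℤ) (q : ℕ) (hq : 0 < q) (hcop : Int.gcd p (q : ℤ) = 1)
    (α β : ℝ) (hα : 1 < α) (hαβ : α < β)
    (hq1 : β * w.2 ≤ (q : ℝ)) (hq2 : (q : ℝ) ≤ 2 * β * w.2)
    (hx1 : 1 / β < |w.1 * (q : ℝ) - w.2 * (p : ℝ)|)
    (hx2 : |w.1 * (q : ℝ) - w.2 * (p : ℝ)| < 1 / α)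
    (w' : ℝ × ℝ) (hw' : w' = (w.1 + 2 * (p : ℝ), w.2 + 2 * (q : ℝ))) :
    |w'.1 / w'.2 - (p : ℝ) / (q : ℝ)| <
        |w.1 * (q : ℝ) - w.2 * (p : ℝ)| / (2 * (q : ℝ) ^ 2) ∧
    |w.1 * (q : ℝ) - w.2 * (p : ℝ)| / (2 * (q : ℝ) ^ 2) < 1 / (2 * (q : ℝ) ^ 2) ∧
    ∃ k : ℕ, (GenContFract.of (w'.1 / w'.2)).convs k = (p : ℝ) / (q : ℝ) := by
  have hq0 : (0 : ℝ) < (q : ℝ) := by exact_mod_cast hq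
  have hβ0 : (0 : ℝ) < β := by linarith
  have hx0 : 0 < |w.1 * (q : ℝ) - w.2 * (p : ℝ)| := lt_trans (by positivity) hx1
  have hden : (0 : ℝ) < w.2 + 2 * (q : ℝ) := by linarith
  have hkey : w'.1 / w'.2 - (p : ℝ) / (q : ℝ) =
      (w.1 * (q : ℝ) - w.2 * (p : ℝ)) / ((q : ℝ) * (w.2 + 2 * (q : ℝ))) := by
    rw [hw']
    field_simp
    ring
  have h1 : |w'.1 / w'.2 - (p : ℝ) / (q : ℝ)| <
      |w.1 * (q : ℝ) - w.2 * (p : ℝ)| / (2 * (q : ℝ) ^ 2) := by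
    rw [hkey, abs_div, abs_of_pos (by positivity : (0:ℝ) < (q : ℝ) * (w.2 + 2 * (q : ℝ)))]
    apply div_lt_div_of_pos_left hx0 (by positivity)
    nlinarith
  have h2 : |w.1 * (q : ℝ) - w.2 * (p : ℝ)| / (2 * (q : ℝ) ^ 2) < 1 / (2 * (q : ℝ) ^ 2) := by
    apply div_lt_div_of_pos_right _ (by positivity)
    calc |w.1 * (q : ℝ) - w.2 * (p : ℝ)| < 1 / α := hx2
      _ < 1 := by rw [div_lt_one (by linarith)]; exact hα
  refine ⟨h1, h2, ?_⟩
  set r : ℚ := Rat.mk' p q hq.ne' hcop with hr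
  have hrden : (r.den : ℝ) = (q : ℝ) := by norm_cast
  have hrcast : (r : ℝ) = (p : ℝ) / (q : ℝ) := by
    rw [Rat.cast_def]
  have := Real.exists_convs_eq_rat (ξ := w'.1 / w'.2) (q := r)
    (by rw [hrcast, hrden]; exact h1.trans h2)
  obtain ⟨n, hn⟩ := this
  exact ⟨n, by rw [hn, hrcast]⟩
end

section
/- (Good slits produce good children.) Suppose w ∈ ℝ² with height |w| = w₂ > 0 and irrational inverse slope, and suppose α > 1, β > α. Let w' = w + 2v with v = (p,q) primitive, β|w| ≤ q ≤ 2β|w|, and 1/β < |w × v| < 1/α. Then the inverse slope of w' has a convergent of height q'' satisfying (α − 1/2)|w'| < q'' < β|w'|, and no convergent of height strictly between |w'| and (α−1/2)|w'|. -/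
/-! The rational `p / q` lies within `c / (|w'| q) < 1 / (2 q²)` of the inverse slope `ξ` of `w'`,
where `c = |w × v| < 1` and `|w'| > 2q`; by Legendre's theorem it is a convergent of `ξ`, with
denominator `q`. For the next denominator `q''` the two-sided estimate
`1 / (q (q + q'')) < |ξ - p / q| ≤ 1 / (q q'')` gives `c q'' ≤ |w'| < c (q + q'')`, hence
`q'' < β |w'|` and `q'' > α |w'| - q > (α - 1/2) |w'|`. Denominators increase, so none lies strictly
between `q < |w'|` and `q''`. -/

open GenContFract (of)

namespace GenContFract

variable {K : Type*} [Field K] [LinearOrder K] [FloorRing K]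

theorem exists_int_contsAux_eq (v : K) (n : ℕ) : ∃ a b : ℤ, (of v).contsAux n = ⟨a, b⟩ := by
  induction n using Nat.twoStepInduction with
  | zero => exact ⟨1, 0, by simp [zeroth_contAux_eq_one_zero]⟩
  | one => exact ⟨⌊v⌋, 1, by simp [first_contAux_eq_h_one, of_h_eq_floor]⟩
  | more n ih₀ ih₁ =>
    obtain ⟨a₀, b₀, h₀⟩ := ih₀
    obtain ⟨a₁, b₁, h₁⟩ := ih₁
    rcases hs : (of v).s.get? n with _ | gp
    · exact ⟨a₁, b₁, by rw [contsAux_stable_step_of_terminated hs, h₁]⟩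
    · obtain ⟨ha, z, hz⟩ := of_partNum_eq_one_and_exists_int_partDen_eq hs
      refine ⟨z * a₁ + a₀, z * b₁ + b₀, ?_⟩
      rw [contsAux_recurrence hs h₀ h₁, ha, hz]
      push_cast
      ring_nf

theorem exists_isCoprime_nums_dens (v : K) {n : ℕ} (hn : ¬(of v).TerminatedAt n) :
    ∃ a b : ℤ, (of v).nums n = a ∧ (of v).dens n = b ∧ IsCoprime a b := by
  obtain ⟨a, b, h⟩ := exists_int_contsAux_eq v (n + 1)
  obtain ⟨a', b', h'⟩ := exists_int_contsAux_eq v (n + 2)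
  have hdet := (SimpContFract.of v).determinant hn
  simp only [SimpContFract.of, num_eq_conts_a, den_eq_conts_b, nth_cont_eq_succ_nth_contAux,
    h, h'] at hdet
  have hdet' : a * b' - b * a' = (-1) ^ (n + 1) := by exact_mod_cast hdet
  have hsq : ((-1 : ℤ) ^ (n + 1)) ^ 2 = 1 := by rw [sq, ← mul_pow]; simp
  refine ⟨a, b, by rw [num_eq_conts_a, nth_cont_eq_succ_nth_contAux, h],
    by rw [den_eq_conts_b, nth_cont_eq_succ_nth_contAux, h],
    (-1) ^ (n + 1) * b', -(-1) ^ (n + 1) * a', ?_⟩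
  linear_combination (-1) ^ (n + 1) * hdet' + hsq

variable [IsStrictOrderedRing K]

theorem one_le_of_den (v : K) (n : ℕ) : 1 ≤ (of v).dens n := by
  induction n with
  | zero => rw [zeroth_den_eq_one]
  | succ n ih => exact ih.trans of_den_mono

theorem of_den_eq_den_of_conv_eq {v : K} {n : ℕ} {r : ℚ} (hn : ¬(of v).TerminatedAt n)
    (hr : (of v).convs n = r) : (of v).dens n = r.den := by
  obtain ⟨a, b, hnum, hden, hcop⟩ := exists_isCoprime_nums_dens v hn
  have hb : 0 < b := by exact_mod_cast hden ▸ one_le_of_den v n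
  have hrab : r = a / b := by
    rw [conv_eq_num_div_den, hnum, hden] at hr
    exact_mod_cast hr.symm
  have hcop' : a.natAbs.Coprime b.natAbs := Int.isCoprime_iff_gcd_eq_one.mp hcop
  rw [hden, hrab, ← Int.cast_natCast, Rat.den_div_eq_of_coprime hb hcop']

theorem one_div_lt_abs_sub_conv {v : K} {n : ℕ} (hn : ¬(of v).TerminatedAt n) :
    1 / ((of v).dens n * ((of v).dens n + (of v).dens (n + 1))) < |v - (of v).convs n| := by
  set B := ((of v).contsAux (n + 1)).b with hB
  set pB := ((of v).contsAux n).b with hpB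
  obtain ⟨gp, hs⟩ : ∃ gp, (of v).s.get? n = some gp := Option.ne_none_iff_exists'.1 hn
  obtain ⟨ifp', hstream', hb⟩ := IntFractPair.exists_succ_get?_stream_of_gcf_of_get?_eq_some hs
  obtain ⟨ifp, hstream, hfr, rfl⟩ := IntFractPair.succ_nth_stream_eq_some_iff.1 hstream'
  have hden : (of v).dens n = B := by rw [den_eq_conts_b, nth_cont_eq_succ_nth_contAux]
  have hden_succ : (of v).dens (n + 1) = gp.b * B + pB := by
    rw [den_eq_conts_b, nth_cont_eq_succ_nth_contAux,
      contsAux_recurrence hs rfl rfl, of_partNum_eq_one (partNum_eq_s_a hs)]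
    simp only [one_mul]
    rfl
  have hsub := sub_convs_eq hstream
  simp only [hfr, if_false, ← hB, ← hpB] at hsub
  have hBpos : 0 < B := hden ▸ one_le_of_den v n |>.trans_lt' one_pos
  have hpB_nonneg : 0 ≤ pB := zero_le_of_contsAux_b
  have hfr_inv : 0 < ifp.fr⁻¹ :=
    inv_pos.2 ((IntFractPair.nth_stream_fr_nonneg hstream).lt_of_ne' hfr)
  -- strictness: the next partial quotient is `⌊ifp.fr⁻¹⌋`
  have hfloor : ifp.fr⁻¹ < gp.b + 1 := hb ▸ Int.lt_floor_add_one _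
  rw [hsub, abs_div, abs_neg_one_pow, abs_of_pos (by positivity), hden, hden_succ]
  refine one_div_lt_one_div_of_lt (by positivity) (mul_lt_mul_of_pos_left ?_ hBpos)
  nlinarith

end GenContFract

open GenContFract

theorem Real.exists_conv_eq_and_den_eq {ξ : ℝ} {r : ℚ} (hne : ξ ≠ r)
    (h : |ξ - r| < 1 / (2 * (r.den : ℝ) ^ 2)) :
    ∃ n, ¬(of ξ).TerminatedAt n ∧ (of ξ).convs n = r ∧ (of ξ).dens n = r.den := by
  obtain ⟨n, hn⟩ := Real.exists_convs_eq_rat h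
  have hnt : ¬(of ξ).TerminatedAt n := fun ht ↦ hne (hn ▸ of_correctness_of_terminatedAt ht)
  exact ⟨n, hnt, hn, of_den_eq_den_of_conv_eq hnt hn⟩

theorem abs_add_two_mul_div_sub_div {a b : ℝ} {p : ℤ} {q : ℕ} (hb : 0 < b + 2 * q)
    (hq : 0 < q) :
    |(a + 2 * p) / (b + 2 * q) - p / q| = |a * q - b * p| / ((b + 2 * q) * q) := by
  have hq' : (0 : ℝ) < q := by exact_mod_cast hq
  rw [div_sub_div _ _ hb.ne' hq'.ne', abs_div, abs_of_pos (mul_pos hb hq')]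
  ring_nf

theorem sub_half_mul_lt_and_lt_mul_of_dist_bounds {α β c q D W : ℝ} (hα : 0 < α) (hβ : 0 < β)
    (hq : 0 < q) (hD : 0 < D) (hqW : 2 * q < W) (hcβ : 1 / β < c) (hcα : c < 1 / α)
    (hlo : 1 / (q * (q + D)) < c / (W * q)) (hup : c / (W * q) ≤ 1 / (q * D)) :
    (α - 1 / 2) * W < D ∧ D < β * W := by
  have hW : 0 < W := by linarith
  rw [div_lt_div_iff₀ (by positivity) (by positivity)] at hlo
  rw [div_le_div_iff₀ (by positivity) (by positivity)] at hup
  rw [div_lt_iff₀ hβ] at hcβ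
  rw [lt_div_iff₀ hα] at hcα
  have hcD : c * D ≤ W := le_of_mul_le_mul_right (by linarith) hq
  have hWc : W < c * (q + D) := lt_of_mul_lt_mul_right (by linarith) hq.le
  constructor <;> nlinarith

theorem good_children_general
    (w : ℝ × ℝ) (hw : 0 < w.2)
    (p : ℤ) (q : ℕ) (hq : 0 < q) (hcop : Int.gcd p (q : ℤ) = 1)
    (α β : ℝ) (hα : 1 < α) (hαβ : α < β)
    (hx1 : 1 / β < |w.1 * (q : ℝ) - w.2 * (p : ℝ)|)
    (hx2 : |w.1 * (q : ℝ) - w.2 * (p : ℝ)| < 1 / α)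
    (w' : ℝ × ℝ) (hw' : w' = (w.1 + 2 * (p : ℝ), w.2 + 2 * (q : ℝ))) :
    (∃ k : ℕ, (α - 1 / 2) * w'.2 < (GenContFract.of (w'.1 / w'.2)).dens k ∧
        (GenContFract.of (w'.1 / w'.2)).dens k < β * w'.2) ∧
    (∀ k : ℕ, ¬ (w'.2 < (GenContFract.of (w'.1 / w'.2)).dens k ∧
        (GenContFract.of (w'.1 / w'.2)).dens k < (α - 1 / 2) * w'.2)) := by
  subst hw'
  set W := w.2 + 2 * (q : ℝ)
  set ξ := (w.1 + 2 * p) / W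
  set c := |w.1 * q - w.2 * p|
  have hq' : (0 : ℝ) < q := by exact_mod_cast hq
  have hqW : 2 * (q : ℝ) < W := by linarith
  have hc_pos : 0 < c := (one_div_pos.2 (by linarith)).trans hx1
  have hc_one : c < 1 := hx2.trans ((div_lt_one (by linarith)).2 hα)
  set r : ℚ := (p : ℚ) / ((q : ℤ) : ℚ)
  have hr_den : r.den = q :=
    Nat.cast_injective (R := ℤ) (Rat.den_div_eq_of_coprime (by omega) hcop)
  have hdist : |ξ - r| = c / (W * q) := by
    push_cast [r]
    exact abs_add_two_mul_div_sub_div (by linarith) hq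
  have hξr : ξ ≠ r := sub_ne_zero.1 (abs_pos.1 (by rw [hdist]; positivity))
  obtain ⟨n, hnt, hn, hden⟩ := Real.exists_conv_eq_and_den_eq hξr
    (by rw [hdist, hr_den, div_lt_div_iff₀ (by positivity) (by positivity)]; nlinarith)
  rw [hr_den] at hden
  have hup := abs_sub_convs_le hnt
  have hlo := one_div_lt_abs_sub_conv hnt
  rw [hn, hdist, hden] at hup hlo
  obtain ⟨hD_lo, hD_hi⟩ := sub_half_mul_lt_and_lt_mul_of_dist_bounds (by linarith) (by linarith)
    hq' (by linarith [one_le_of_den ξ (n + 1)]) hqW hx1 hx2 hlo hup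
  have hmono : Monotone (of ξ).dens := monotone_nat_of_le_succ fun _ ↦ of_den_mono
  refine ⟨⟨n + 1, hD_lo, hD_hi⟩, fun k ⟨hk_lo, hk_hi⟩ ↦ ?_⟩
  rcases le_or_gt k n with hk | hk
  · linarith [hden ▸ hmono hk]
  · linarith [hmono hk]

/-- Good slits produce good children: if `w` is a slit with irrational inverse slope and
`w' = w + 2v` with `v = (p,q)` primitive, `β|w| ≤ q ≤ 2β|w|`, `1/β < |w × v| < 1/α`, then
the inverse slope of `w'` has a convergent of height `q''` with `(α−1/2)|w'| < q'' < β|w'|`,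
and no convergent of height strictly between `|w'|` and `(α−1/2)|w'|`. -/
theorem good_children
    (w : ℝ × ℝ) (hw : 0 < w.2) (hirr : Irrational (w.1 / w.2))
    (p : ℤ) (q : ℕ) (hq : 0 < q) (hcop : Int.gcd p (q : ℤ) = 1)
    (α β : ℝ) (hα : 1 < α) (hαβ : α < β)
    (hq1 : β * w.2 ≤ (q : ℝ)) (hq2 : (q : ℝ) ≤ 2 * β * w.2)
    (hx1 : 1 / β < |w.1 * (q : ℝ) - w.2 * (p : ℝ)|)
    (hx2 : |w.1 * (q : ℝ) - w.2 * (p : ℝ)| < 1 / α)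
    (w' : ℝ × ℝ) (hw' : w' = (w.1 + 2 * (p : ℝ), w.2 + 2 * (q : ℝ))) :
    (∃ k : ℕ, (α - 1 / 2) * w'.2 < (GenContFract.of (w'.1 / w'.2)).dens k ∧
        (GenContFract.of (w'.1 / w'.2)).dens k < β * w'.2) ∧
    (∀ k : ℕ, ¬ (w'.2 < (GenContFract.of (w'.1 / w'.2)).dens k ∧
        (GenContFract.of (w'.1 / w'.2)).dens k < (α - 1 / 2) * w'.2)) :=
  good_children_general w hw p q hq hcop α β hα hαβ hx1 hx2 w' hw'
end

section
/- Let u ∈ ℤ² be primitive with height |u| = u₂ > 0. Then there exists ũ ∈ ℤ × ℤ_{>0} with |u × ũ| = 1 and |ũ| ≤ |u|, and there are exactly two such ũ. -/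
/-- For a primitive integer vector `u` with positive height, there exist exactly two
vectors `ũ ∈ ℤ × ℤ_{>0}` with `|u × ũ| = 1` and `|ũ| ≤ |u|`. -/
theorem exists_two_complementary_vectors
    (u : ℤ × ℤ) (hcop : Int.gcd u.1 u.2 = 1) (hu : 0 < u.2) :
    ∃ a b : ℤ × ℤ, a ≠ b ∧
      (|u.1 * a.2 - u.2 * a.1| = 1 ∧ 0 < a.2 ∧ a.2 ≤ u.2) ∧
      (|u.1 * b.2 - u.2 * b.1| = 1 ∧ 0 < b.2 ∧ b.2 ≤ u.2) ∧
      (∀ c : ℤ × ℤ, (|u.1 * c.2 - u.2 * c.1| = 1 ∧ 0 < c.2 ∧ c.2 ≤ u.2) →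
        c = a ∨ c = b) := by
  obtain ⟨A, B, hAB⟩ : ∃ A B : ℤ, u.1 * A + u.2 * B = 1 := by
    refine ⟨Int.gcdA u.1 u.2, Int.gcdB u.1 u.2, ?_⟩
    have h := Int.gcd_eq_gcd_ab u.1 u.2
    rw [hcop] at h; exact_mod_cast h.symm
  have hne : u.2 ≠ 0 := by omega
  set q1 := (A - 1) / u.2 with hq1
  set a : ℤ × ℤ := (-B - u.1 * q1, A - u.2 * q1) with ha
  set q2 := (-A - 1) / u.2 with hq2
  set b : ℤ × ℤ := (B - u.1 * q2, -A - u.2 * q2) with hb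
  have ha2 : a.2 = (A - 1) % u.2 + 1 := by
    simp only [ha, Int.emod_def, hq1]; ring
  have hb2 : b.2 = (-A - 1) % u.2 + 1 := by
    simp only [hb, Int.emod_def, hq2]; ring
  have hm1 := Int.emod_nonneg (A - 1) hne
  have hm1' := Int.emod_lt_of_pos (A - 1) hu
  have hm2 := Int.emod_nonneg (-A - 1) hne
  have hm2' := Int.emod_lt_of_pos (-A - 1) hu
  have hca : u.1 * a.2 - u.2 * a.1 = 1 := by
    simp only [ha]; linarith [hAB, mul_comm u.1 (u.2 * q1)]
  have hcb : u.1 * b.2 - u.2 * b.1 = -1 := by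
    simp only [hb]; linarith [hAB, mul_comm u.1 (u.2 * q2)]
  have uniq : ∀ v w : ℤ × ℤ, u.1 * v.2 - u.2 * v.1 = u.1 * w.2 - u.2 * w.1 →
      0 < v.2 → v.2 ≤ u.2 → 0 < w.2 → w.2 ≤ u.2 → v = w := by
    intro v w he hv1 hv2 hw1 hw2
    have hcop' : IsCoprime u.2 u.1 := (Int.isCoprime_iff_gcd_eq_one.mpr hcop).symm
    have h1 : u.2 ∣ u.1 * (v.2 - w.2) := ⟨v.1 - w.1, by ring_nf; linarith [he]⟩
    obtain ⟨k, hk⟩ := hcop'.dvd_of_dvd_mul_left h1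
    have h2 : v.2 = w.2 := by
      rcases lt_trichotomy k 0 with h | h | h
      · nlinarith
      · subst h; simp at hk; omega
      · nlinarith
    have h3 : v.1 = w.1 := by
      have : u.2 * (v.1 - w.1) = 0 := by rw [h2] at he; linarith
      have := mul_eq_zero.mp this
      omega
    exact Prod.ext h3 h2
  refine ⟨a, b, ?_, ⟨by rw [hca]; norm_num, by omega, by omega⟩,
    ⟨by rw [hcb]; norm_num, by omega, by omega⟩, ?_⟩
  · intro h; rw [h, hcb] at hca; omega
  · rintro c ⟨hc1, hc2, hc3⟩
    rcases abs_eq (by norm_num : (0:ℤ) ≤ 1) |>.mp hc1 with h | h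
    · exact Or.inl (uniq c a (by rw [h, hca]) hc2 hc3 (by omega) (by omega))
    · exact Or.inr (uniq c b (by rw [h, hcb]) hc2 hc3 (by omega) (by omega))
end

section
/- Let w ∈ ℝ² with height |w| = w₂ > 0, and u, v ∈ ℝ² with positive heights such that |u × v| = 1 and sin∠(u,w) < C/(|u|·Q) and |v| < Q/C for some C, Q > 0. Then sin∠(v,w) ≤ sin∠(u,v) + sin∠(u,w) < 2 sin∠(u,v), and hence |w × v| = |w||v| sin∠(v,w) < 2|w||v| sin∠(u,v) = 2|w|/|u|. -/
/-! The planar identity `(v × w) u = (u × w) v - (u × v) w` gives, after taking norms and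
using `|a × b| = ‖a‖ ‖b‖ sin∠(a,b)`, the triangle inequality for sines. The hypotheses on `C`
and `Q` force `sin∠(u,w) < 1 / (‖u‖ ‖v‖) = sin∠(u,v)`, and the rest is arithmetic. -/

open InnerProductGeometry

namespace EuclideanSpace

def cross (a b : EuclideanSpace ℝ (Fin 2)) : ℝ := a 0 * b 1 - a 1 * b 0

theorem cross_swap (a b : EuclideanSpace ℝ (Fin 2)) : cross b a = -cross a b := by
  unfold cross; ring

theorem abs_cross_eq_norm_mul_norm_mul_sin_angle (a b : EuclideanSpace ℝ (Fin 2)) :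
    |cross a b| = ‖a‖ * ‖b‖ * Real.sin (angle a b) := by
  have lagrange : inner ℝ a a * inner ℝ b b - inner ℝ a b * inner ℝ a b = cross a b ^ 2 := by
    simp only [cross, PiLp.inner_apply, RCLike.inner_apply, conj_trivial, Fin.sum_univ_two]
    ring
  rw [mul_comm, sin_angle_mul_norm_mul_norm, lagrange, Real.sqrt_sq_eq_abs]

theorem cross_smul_eq_sub (u v w : EuclideanSpace ℝ (Fin 2)) :
    cross v w • u = cross u w • v - cross u v • w := by
  ext i
  fin_cases i <;> simp [cross] <;> ring

theorem abs_cross_mul_norm_le (u v w : EuclideanSpace ℝ (Fin 2)) :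
    |cross v w| * ‖u‖ ≤ |cross u w| * ‖v‖ + |cross u v| * ‖w‖ := by
  have h := norm_sub_le (cross u w • v) (cross u v • w)
  rw [← cross_smul_eq_sub] at h
  simpa only [norm_smul, Real.norm_eq_abs] using h

theorem sin_angle_le_sin_angle_add_sin_angle {u v w : EuclideanSpace ℝ (Fin 2)}
    (hu : u ≠ 0) (hv : v ≠ 0) (hw : w ≠ 0) :
    Real.sin (angle v w) ≤ Real.sin (angle u v) + Real.sin (angle u w) := by
  have hnorm : 0 < ‖u‖ * ‖v‖ * ‖w‖ := by simp [norm_pos_iff, hu, hv, hw]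
  refine le_of_mul_le_mul_right ?_ hnorm
  calc Real.sin (angle v w) * (‖u‖ * ‖v‖ * ‖w‖) = |cross v w| * ‖u‖ := by
        rw [abs_cross_eq_norm_mul_norm_mul_sin_angle]; ring
    _ ≤ |cross u w| * ‖v‖ + |cross u v| * ‖w‖ := abs_cross_mul_norm_le u v w
    _ = (Real.sin (angle u v) + Real.sin (angle u w)) * (‖u‖ * ‖v‖ * ‖w‖) := by
        simp only [abs_cross_eq_norm_mul_norm_mul_sin_angle]; ring

theorem sin_angle_eq_one_div_of_abs_cross_eq_one {a b : EuclideanSpace ℝ (Fin 2)}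
    (h : |cross a b| = 1) : Real.sin (angle a b) = 1 / (‖a‖ * ‖b‖) :=
  eq_one_div_of_mul_eq_one_left <| by
    rw [← h, abs_cross_eq_norm_mul_norm_mul_sin_angle, mul_comm]

end EuclideanSpace

open EuclideanSpace

theorem sin_angle_triangle_cross_bound_general
    (u v w : EuclideanSpace ℝ (Fin 2))
    (hu : u ≠ 0) (hv : v ≠ 0) (hw : w ≠ 0)
    (C Q : ℝ) (hC : 0 < C)
    (huv : |u 0 * v 1 - u 1 * v 0| = 1)
    (huw : Real.sin (angle u w) < C / (‖u‖ * Q))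
    (hvQ : ‖v‖ < Q / C) :
    Real.sin (angle v w) ≤ Real.sin (angle u v) + Real.sin (angle u w) ∧
    Real.sin (angle v w) < 2 * Real.sin (angle u v) ∧
    |w 0 * v 1 - w 1 * v 0| < 2 * ‖w‖ / ‖u‖ := by
  have hnu : 0 < ‖u‖ := norm_pos_iff.mpr hu
  have hnvw : 0 < ‖v‖ * ‖w‖ := mul_pos (norm_pos_iff.mpr hv) (norm_pos_iff.mpr hw)
  have hsin_uv : Real.sin (angle u v) = 1 / (‖u‖ * ‖v‖) :=
    sin_angle_eq_one_div_of_abs_cross_eq_one huv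
  have htri := sin_angle_le_sin_angle_add_sin_angle hu hv hw
  have hsin_uw : Real.sin (angle u w) < Real.sin (angle u v) := calc
    Real.sin (angle u w) < C / (‖u‖ * Q) := huw
    _ = 1 / (‖u‖ * (Q / C)) := by field_simp
    _ < 1 / (‖u‖ * ‖v‖) := one_div_lt_one_div_of_lt (by positivity) (by gcongr)
    _ = Real.sin (angle u v) := hsin_uv.symm
  have hsin_vw : Real.sin (angle v w) < 2 * Real.sin (angle u v) := by linarith
  refine ⟨htri, hsin_vw, ?_⟩
  calc |w 0 * v 1 - w 1 * v 0| = |cross v w| := by rw [cross_swap, abs_neg]; rfl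
    _ = ‖v‖ * ‖w‖ * Real.sin (angle v w) := abs_cross_eq_norm_mul_norm_mul_sin_angle v w
    _ < ‖v‖ * ‖w‖ * (2 * Real.sin (angle u v)) := mul_lt_mul_of_pos_left hsin_vw hnvw
    _ = 2 * ‖w‖ / ‖u‖ := by rw [hsin_uv]; field_simp

/-- Angle comparison for planar vectors: if `|u × v| = 1`, `sin∠(u,w) < C/(‖u‖·Q)` and
`‖v‖ < Q/C`, then `sin∠(v,w) ≤ sin∠(u,v) + sin∠(u,w) < 2 sin∠(u,v)` and
`|w × v| < 2‖w‖/‖u‖`. -/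
theorem sin_angle_triangle_cross_bound
    (u v w : EuclideanSpace ℝ (Fin 2))
    (hu : u ≠ 0) (hv : v ≠ 0) (hw : w ≠ 0)
    (C Q : ℝ) (hC : 0 < C) (hQ : 0 < Q)
    (huv : |u 0 * v 1 - u 1 * v 0| = 1)
    (huw : Real.sin (angle u w) < C / (‖u‖ * Q))
    (hvQ : ‖v‖ < Q / C) :
    Real.sin (angle v w) ≤ Real.sin (angle u v) + Real.sin (angle u w) ∧
    Real.sin (angle v w) < 2 * Real.sin (angle u v) ∧
    |w 0 * v 1 - w 1 * v 0| < 2 * ‖w‖ / ‖u‖ :=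
  sin_angle_triangle_cross_bound_general u v w hu hv hw C Q hC huv huw hvQ
end

section
/- (gcd stability under the Liouville construction.) Let q₀ ∈ ℕ positive, (p₁, p₂, q₀) ∈ ℤ³ with gcd(p₁,p₂,q₀)=1, let m,n ∈ ℤ, d = gcd(p₁+m q₀, p₂+n q₀), and write (p₁+m q₀, p₂+n q₀) = d·u with u primitive. Let ũ ∈ ℤ² satisfy |u × ũ| = 1, and set (m',n') = (m,n) + 2(ũ + a u) for some a ∈ ℤ. Then d' := gcd(p₁+m' q₀, p₂+n' q₀) satisfies d' = gcd(d, 2q₀) ≤ gcd(2q₀, d), and in particular d' ≤ 2 whenever gcd(p₁,p₂,q₀) = 1 forces gcd(d, q₀) = 1. -/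
/-! In the basis `(u, ũ)` of `ℤ²` the new vector is
`(p₁ + m' q₀, p₂ + n' q₀) = (d + 2 a q₀) u + 2 q₀ ũ`, and a unimodular change of basis preserves
the gcd of coordinates, so `d' = gcd(d + 2 a q₀, 2 q₀) = gcd(d, 2 q₀)`. Any common divisor of `d`
and `q₀` divides `p₁`, `p₂` and `q₀`, so `gcd(d, q₀) = 1` and hence `gcd(d, 2 q₀) ∣ 2`. -/

namespace Int

theorem gcd_add_mul_of_isUnit_det {u v : ℤ × ℤ} (h : IsUnit (u.1 * v.2 - u.2 * v.1)) (α β : ℤ) :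
    gcd (α * u.1 + β * v.1) (α * u.2 + β * v.2) = gcd α β := by
  set x := α * u.1 + β * v.1
  set y := α * u.2 + β * v.2
  apply Nat.dvd_antisymm
  · have hα : (gcd x y : ℤ) ∣ α * (u.1 * v.2 - u.2 * v.1) := by
      have : α * (u.1 * v.2 - u.2 * v.1) = x * v.2 - y * v.1 := by ring
      rw [this]
      exact dvd_sub ((gcd_dvd_left x y).mul_right _) ((gcd_dvd_right x y).mul_right _)
    have hβ : (gcd x y : ℤ) ∣ β * (u.1 * v.2 - u.2 * v.1) := by
      have : β * (u.1 * v.2 - u.2 * v.1) = y * u.1 - x * u.2 := by ring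
      rw [this]
      exact dvd_sub ((gcd_dvd_right x y).mul_right _) ((gcd_dvd_left x y).mul_right _)
    exact dvd_gcd (h.dvd_mul_right.mp hα) (h.dvd_mul_right.mp hβ)
  · have hα := gcd_dvd_left α β
    have hβ := gcd_dvd_right α β
    exact dvd_gcd (dvd_add (hα.mul_right _) (hβ.mul_right _))
      (dvd_add (hα.mul_right _) (hβ.mul_right _))

theorem gcd_eq_one_of_dvd_add_mul {p₁ p₂ q d m n : ℤ} (hcop : gcd p₁ (gcd p₂ q) = 1)
    (h₁ : d ∣ p₁ + m * q) (h₂ : d ∣ p₂ + n * q) : gcd d q = 1 := by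
  have hq : (gcd d q : ℤ) ∣ q := gcd_dvd_right d q
  have hp₁ : (gcd d q : ℤ) ∣ p₁ :=
    (dvd_add_left (hq.mul_left m)).mp ((gcd_dvd_left d q).trans h₁)
  have hp₂ : (gcd d q : ℤ) ∣ p₂ :=
    (dvd_add_left (hq.mul_left n)).mp ((gcd_dvd_left d q).trans h₂)
  exact Nat.dvd_one.mp (hcop ▸ dvd_gcd hp₁ (dvd_coe_gcd hp₂ hq))

theorem gcd_mul_right_dvd_natAbs_of_gcd_eq_one {d q : ℤ} (k : ℤ) (h : gcd d q = 1) :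
    gcd d (k * q) ∣ k.natAbs := by
  have := gcd_mul_right_dvd_mul_gcd d k q
  rw [h, mul_one] at this
  exact this.trans (gcd_dvd_natAbs_right d k)

end Int

theorem liouville_gcd_stability_general
    (p₁ p₂ : ℤ) (q₀ : ℤ)
    (hcop : Int.gcd p₁ (Int.gcd p₂ q₀) = 1)
    (m n a : ℤ) (u ut : ℤ × ℤ)
    (d : ℤ)
    (hu₁ : p₁ + m * q₀ = d * u.1) (hu₂ : p₂ + n * q₀ = d * u.2)
    (hdet : |u.1 * ut.2 - u.2 * ut.1| = 1)
    (m' n' : ℤ)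
    (hm' : m' = m + 2 * (ut.1 + a * u.1)) (hn' : n' = n + 2 * (ut.2 + a * u.2)) :
    (Int.gcd (p₁ + m' * q₀) (p₂ + n' * q₀) : ℤ) = Int.gcd d (2 * q₀) ∧
    (Int.gcd (p₁ + m' * q₀) (p₂ + n' * q₀) : ℤ) ≤ 2 := by
  have hA : p₁ + m' * q₀ = (d + a * (2 * q₀)) * u.1 + 2 * q₀ * ut.1 := by
    rw [hm']; linear_combination hu₁
  have hB : p₂ + n' * q₀ = (d + a * (2 * q₀)) * u.2 + 2 * q₀ * ut.2 := by
    rw [hn']; linear_combination hu₂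
  have hd' : Int.gcd (p₁ + m' * q₀) (p₂ + n' * q₀) = Int.gcd d (2 * q₀) := by
    rw [hA, hB, Int.gcd_add_mul_of_isUnit_det (Int.isUnit_iff_abs_eq.mpr hdet),
      Int.gcd_add_mul_right_left]
  have hcop' : Int.gcd d q₀ = 1 :=
    Int.gcd_eq_one_of_dvd_add_mul hcop ⟨u.1, hu₁⟩ ⟨u.2, hu₂⟩
  have hle : Int.gcd d (2 * q₀) ≤ 2 :=
    Nat.le_of_dvd two_pos (Int.gcd_mul_right_dvd_natAbs_of_gcd_eq_one 2 hcop')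
  exact ⟨congrArg _ hd', by rw [hd']; exact_mod_cast hle⟩

/-- gcd stability under the Liouville construction: the new gcd `d'` equals
`gcd(d, 2q₀)`, and is at most `2`. -/
theorem liouville_gcd_stability
    (p₁ p₂ : ℤ) (q₀ : ℤ) (hq₀ : 0 < q₀)
    (hcop : Int.gcd p₁ (Int.gcd p₂ q₀) = 1)
    (m n a : ℤ) (u ut : ℤ × ℤ)
    (d : ℤ) (hd : d = Int.gcd (p₁ + m * q₀) (p₂ + n * q₀))
    (hu₁ : p₁ + m * q₀ = d * u.1) (hu₂ : p₂ + n * q₀ = d * u.2)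
    (hprim : Int.gcd u.1 u.2 = 1)
    (hdet : |u.1 * ut.2 - u.2 * ut.1| = 1)
    (m' n' : ℤ)
    (hm' : m' = m + 2 * (ut.1 + a * u.1)) (hn' : n' = n + 2 * (ut.2 + a * u.2)) :
    (Int.gcd (p₁ + m' * q₀) (p₂ + n' * q₀) : ℤ) = Int.gcd d (2 * q₀) ∧
    (Int.gcd (p₁ + m' * q₀) (p₂ + n' * q₀) : ℤ) ≤ 2 :=
  liouville_gcd_stability_general p₁ p₂ q₀ hcop m n a u ut d hu₁ hu₂ hdet m' n' hm' hn'
end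

section
/- Let {H_j} be the intervals H_j = [h^{r^j}, 5^{(r^j−1)/(r−1)} h^{r^j}] for j ≥ 0, where 1 < r < 2 and h > 1 satisfies h^{(r−1)²} > 5. Then for all j ≥ 0, sup H_j < inf H_{j+1} = (inf H_j)^r; i.e., the intervals H_j are pairwise disjoint and ordered. -/
/-- The intervals `H_j = [h^{r^j}, 5^{(r^j−1)/(r−1)}·h^{r^j}]` are disjoint and ordered:
`sup H_j < inf H_{j+1} = (inf H_j)^r`. -/
theorem H_intervals_ordered
    (r : ℝ) (hr1 : 1 < r) (hr2 : r < 2)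
    (h : ℝ) (hh : 1 < h) (hbig : (5 : ℝ) < h ^ ((r - 1) ^ 2)) (j : ℕ) :
    (5 : ℝ) ^ ((r ^ j - 1) / (r - 1)) * h ^ (r ^ j) < h ^ (r ^ (j + 1)) ∧
    h ^ (r ^ (j + 1)) = (h ^ (r ^ j)) ^ r := by
  have hr : (0:ℝ) < r - 1 := by linarith
  have hrj : (1:ℝ) ≤ r ^ j := one_le_pow₀ hr1.le
  have he : 0 ≤ (r ^ j - 1) / (r - 1) := div_nonneg (by linarith) hr.le
  have h0 : (0:ℝ) < h := by linarith
  constructor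
  · have h1 : (5:ℝ) ^ ((r ^ j - 1) / (r - 1)) ≤
        (h ^ ((r-1)^2)) ^ ((r ^ j - 1) / (r - 1)) :=
      Real.rpow_le_rpow (by norm_num) hbig.le he
    rw [← Real.rpow_mul h0.le] at h1
    have heq : (r-1)^2 * ((r ^ j - 1) / (r - 1)) = (r-1) * (r ^ j - 1) := by
      field_simp
    rw [heq] at h1
    have h2 : h ^ ((r-1) * (r ^ j - 1)) < h ^ (r ^ j * (r - 1)) := by
      apply Real.rpow_lt_rpow_left_iff hh |>.mpr
      nlinarith
    have h3 : (5:ℝ) ^ ((r ^ j - 1) / (r - 1)) < h ^ (r ^ j * (r - 1)) :=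
      lt_of_le_of_lt h1 h2
    have h4 : (0:ℝ) < h ^ (r ^ j : ℝ) := Real.rpow_pos_of_pos h0 _
    calc (5:ℝ) ^ ((r ^ j - 1) / (r - 1)) * h ^ (r ^ j)
        < h ^ (r ^ j * (r - 1)) * h ^ (r ^ j : ℝ) := by
          exact mul_lt_mul_of_pos_right h3 h4
      _ = h ^ (r ^ j * (r - 1) + r ^ j) := (Real.rpow_add h0 _ _).symm
      _ = h ^ (r ^ (j+1)) := by rw [pow_succ]; ring_nf
  · rw [pow_succ, Real.rpow_mul h0.le]
end
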